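/- arXiv:2503.07001 — 2 statements merged into one kernel-verified Lean document; each statement's English description precedes it below -/
import Mathlib

section
/- Let p ≥ 3, let ε₁, …, εₙ be i.i.d. Rademacher random variables, and let a₁, …, aₙ, b₁, …, bₙ be real numbers with ∑_{i=1}^n aᵢ² = ∑_{i=1}^n bᵢ² = 1 such that the vector (a₁², …, aₙ²) is majorized by (b₁², …, bₙ²) in the Schur order. Then E|∑_{i=1}^n bᵢεᵢ|^p ≤ E|∑_{i=1}^n aᵢεᵢ|^p. -/
open MeasureTheory ProbabilityTheory Real

/-- The law of a Rademacher random variable: `±1` with probability `1/2` each. -/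
noncomputable def rademacherLaw : Measure ℝ :=
  ((1 : ENNReal) / 2) • Measure.dirac 1 + ((1 : ENNReal) / 2) • Measure.dirac (-1)

/-- `x` is majorized by `y` in the Schur order: for every `k`, the sum of the `k` largest
coordinates of `x` is at most the sum of the `k` largest coordinates of `y`.  This is
expressed equivalently as: every partial sum of `x` over a set `A` is dominated by some
partial sum of `y` over a set of the same cardinality. -/
def IsMajorizedBy {n : ℕ} (x y : Fin n → ℝ) : Prop :=
  ∀ A : Finset (Fin n), ∃ B : Finset (Fin n),
    B.card = A.card ∧ ∑ i ∈ A, x i ≤ ∑ i ∈ B, y i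

/-!
Up to the factor `2⁻ⁿ`, `𝔼|∑ cᵢ εᵢ|^p` is the sum of `|∑ cᵢ σᵢ|^p` over all sign vectors `σ`.
Freeze every sign except those at two coordinates `j, k`, with `s = c_j`, `t = c_k` and frozen
part `z`: the four completions contribute `G (s² + t² + 2st) + G (s² + t² - 2st)`, where
`G r = |z + √r|^p + |z - √r|^p`. For `p ≥ 3` the function `G` is convex on `[0, ∞)`: its
derivative is `p/2 · g(√r)/√r` with `g x = ψ(z + x) - ψ(z - x)`, `ψ w = |w|^(p-2) w`, and
`g x / x` increases as soon as `p - 2 ≥ 1`. So at fixed `s² + t²` the moment grows with `|st|`,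
i.e. every T-transform of the vector of squares `(cᵢ²)` (a transfer between two coordinates
that brings them closer) increases it. Finally `a² ≺ b²` means that `a²` is reached from `b²`
by finitely many T-transforms (Hardy–Littlewood–Pólya).
-/

theorem Fintype.sum_units_int {M : Type*} [AddCommMonoid M] (f : ℤˣ → M) :
    ∑ u, f u = f 1 + f (-1) := Finset.sum_pair (by decide)

section PairMoment

open Set Filter Topology

theorem hasDerivAt_abs_rpow_mul_self {q : ℝ} (hq : 0 < q) (x : ℝ) :
    HasDerivAt (fun w : ℝ => |w| ^ q * w) ((q + 1) * |x| ^ q) x := by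
  rcases eq_or_ne x 0 with rfl | hx
  · rw [hasDerivAt_iff_tendsto_slope_zero]
    have hcont : Tendsto (fun t : ℝ => |t| ^ q) (𝓝[≠] 0) (𝓝 0) := by
      have := ((continuous_abs.rpow_const fun _ => Or.inr hq.le).tendsto (0 : ℝ)).mono_left
        (nhdsWithin_le_nhds (s := {0}ᶜ))
      simpa [zero_rpow hq.ne'] using this
    simp only [abs_zero, zero_rpow hq.ne', mul_zero, zero_add, sub_zero, smul_eq_mul]
    refine hcont.congr' (eventually_nhdsWithin_of_forall fun t (ht : t ≠ 0) => ?_)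
    field_simp
  · refine (((hasDerivAt_abs hx).rpow_const (Or.inl (abs_ne_zero.2 hx))).mul
      (hasDerivAt_id x)).congr_deriv ?_
    have e : |x| ^ (q - 1) * |x| = |x| ^ q := by
      rw [← rpow_add_one (abs_ne_zero.2 hx), sub_add_cancel]
    rw [id_eq, mul_comm _ x, ← mul_assoc, ← mul_assoc, self_mul_sign]
    linear_combination q * e

theorem add_rpow_mul_sub_le_sub_rpow_mul_add {q x z : ℝ} (hq : 1 ≤ q) (hx : 0 ≤ x)
    (hxz : q * x ≤ z) : (z + x) ^ q * (z - q * x) ≤ (z - x) ^ q * (z + q * x) := by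
  set D : ℝ → ℝ := fun t => (z - t) ^ q * (z + q * t) - (z + t) ^ q * (z - q * t)
  have hD : ∀ t, 0 < t → t < z →
      HasDerivAt D (q * (q + 1) * t * ((z + t) ^ (q - 1) - (z - t) ^ (q - 1))) t := by
    intro t ht htz
    have h1 := ((hasDerivAt_id t).const_sub z).rpow_const (p := q) (Or.inr hq)
    have h2 := ((hasDerivAt_id t).const_add z).rpow_const (p := q) (Or.inr hq)
    have h3 := (((hasDerivAt_id t).const_mul q).const_add z)
    have h4 := (((hasDerivAt_id t).const_mul q).const_sub z)
    refine ((h1.mul h3).sub (h2.mul h4)).congr_deriv ?_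
    have hzt : z - t ≠ 0 := by linarith
    have hzt' : z + t ≠ 0 := by linarith
    simp only [id_eq]
    rw [rpow_sub_one hzt, rpow_sub_one hzt']
    field_simp
    ring
  have hxz' : x ≤ z := by nlinarith
  have hmono : MonotoneOn D (Icc 0 x) := by
    refine monotoneOn_of_deriv_nonneg (convex_Icc 0 x) ?_ ?_ ?_
    · have : Continuous fun w : ℝ => w ^ q := continuous_rpow_const (by linarith)
      fun_prop
    · rw [interior_Icc]
      exact fun t ht => (hD t ht.1 (by linarith [ht.2])).differentiableAt.differentiableWithinAt
    · rw [interior_Icc]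
      intro t ⟨ht, htx⟩
      rw [(hD t ht (by linarith)).deriv]
      have : (z - t) ^ (q - 1) ≤ (z + t) ^ (q - 1) :=
        rpow_le_rpow (by linarith) (by linarith) (by linarith)
      have : 0 ≤ q * (q + 1) * t := by positivity
      nlinarith
  have := hmono ⟨le_rfl, hx⟩ ⟨hx, le_rfl⟩ hx
  simp only [D, sub_zero, add_zero, mul_zero, sub_self] at this
  linarith

theorem abs_add_rpow_mul_add_abs_sub_rpow_mul_nonneg {q x : ℝ} (hq : 1 ≤ q) (hx : 0 ≤ x)
    (z : ℝ) : 0 ≤ |z + x| ^ q * (q * x - z) + |z - x| ^ q * (q * x + z) := by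
  wlog hz : 0 ≤ z generalizing z
  · have := this (-z) (by linarith)
    rw [show -z + x = -(z - x) by ring, show -z - x = -(z + x) by ring, abs_neg, abs_neg] at this
    linarith
  rcases le_or_gt z (q * x) with hzx | hzx
  · have : 0 ≤ q * x + z := by positivity
    have := rpow_nonneg (abs_nonneg (z + x)) q
    have := rpow_nonneg (abs_nonneg (z - x)) q
    nlinarith
  · have hxz : x ≤ z := by nlinarith
    rw [abs_of_nonneg (by linarith), abs_of_nonneg (by linarith)]
    linarith [add_rpow_mul_sub_le_sub_rpow_mul_add hq hx hzx.le]

theorem monotoneOn_abs_rpow_mul_slope {q : ℝ} (hq : 1 ≤ q) (z : ℝ) :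
    MonotoneOn (fun x => (|z + x| ^ q * (z + x) - |z - x| ^ q * (z - x)) / x) (Ioi 0) := by
  have hg : ∀ x, HasDerivAt (fun x => |z + x| ^ q * (z + x) - |z - x| ^ q * (z - x))
      ((q + 1) * |z + x| ^ q + (q + 1) * |z - x| ^ q) x := by
    intro x
    have h1 := (hasDerivAt_abs_rpow_mul_self (by linarith) (z + x)).comp x
      ((hasDerivAt_id x).const_add z)
    have h2 := (hasDerivAt_abs_rpow_mul_self (by linarith) (z - x)).comp x
      ((hasDerivAt_id x).const_sub z)
    exact (h1.sub h2).congr_deriv (by ring)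
  have hslope : ∀ x, 0 < x → HasDerivAt
      (fun x => (|z + x| ^ q * (z + x) - |z - x| ^ q * (z - x)) / x)
      ((|z + x| ^ q * (q * x - z) + |z - x| ^ q * (q * x + z)) / x ^ 2) x := by
    intro x hx
    exact ((hg x).div (hasDerivAt_id x) hx.ne').congr_deriv (by simp only [id_eq]; ring)
  refine monotoneOn_of_deriv_nonneg (convex_Ioi 0) ?_ ?_ ?_
  · exact fun x hx => (hslope x hx).continuousAt.continuousWithinAt
  · rw [interior_Ioi]
    exact fun x hx => (hslope x hx).differentiableAt.differentiableWithinAt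
  · rw [interior_Ioi]
    intro x hx
    rw [(hslope x hx).deriv]
    exact div_nonneg (abs_add_rpow_mul_add_abs_sub_rpow_mul_nonneg hq (le_of_lt hx) z)
      (sq_nonneg x)

theorem convexOn_abs_add_sqrt_rpow_add_abs_sub_sqrt_rpow {p : ℝ} (hp : 3 ≤ p) (z : ℝ) :
    ConvexOn ℝ (Ici 0) (fun t => |z + √t| ^ p + |z - √t| ^ p) := by
  have hderiv : ∀ t, 0 < t → HasDerivAt (fun t => |z + √t| ^ p + |z - √t| ^ p)
      (p / 2 * ((|z + √t| ^ (p - 2) * (z + √t) - |z - √t| ^ (p - 2) * (z - √t)) / √t)) t := by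
    intro t ht
    have hs := hasDerivAt_sqrt ht.ne'
    have h1 := (hasDerivAt_abs_rpow (z + √t) (by linarith : (1 : ℝ) < p)).comp t (hs.const_add z)
    have h2 := (hasDerivAt_abs_rpow (z - √t) (by linarith : (1 : ℝ) < p)).comp t (hs.const_sub z)
    have : √t ≠ 0 := (sqrt_pos.2 ht).ne'
    exact (h1.add h2).congr_deriv (by field_simp; ring)
  refine MonotoneOn.convexOn_of_deriv (convex_Ici 0) ?_ ?_ ?_
  · have h : Continuous fun w : ℝ => |w| ^ p :=
      continuous_abs.rpow_const fun _ => Or.inr (by linarith)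
    exact ((h.comp (by fun_prop : Continuous fun t => z + √t)).add
      (h.comp (by fun_prop : Continuous fun t => z - √t))).continuousOn
  · rw [interior_Ici]
    exact fun t ht => (hderiv t ht).differentiableAt.differentiableWithinAt
  · rw [interior_Ici]
    intro t ht t' ht' htt'
    rw [(hderiv t ht).deriv, (hderiv t' ht').deriv]
    exact mul_le_mul_of_nonneg_left (monotoneOn_abs_rpow_mul_slope (by linarith) z
      (sqrt_pos.2 ht) (sqrt_pos.2 ht') (sqrt_le_sqrt htt')) (by linarith)

theorem ConvexOn.map_add_add_map_sub_le {s : Set ℝ} {f : ℝ → ℝ} (hf : ConvexOn ℝ s f)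
    {m r r' : ℝ} (hm : m - r' ∈ s) (hm' : m + r' ∈ s) (hr : |r| ≤ r') :
    f (m + r) + f (m - r) ≤ f (m + r') + f (m - r') := by
  rcases eq_or_lt_of_le ((abs_nonneg r).trans hr) with hr0 | hr0
  · obtain rfl : r = 0 := abs_nonpos_iff.1 (hr0 ▸ hr)
    rw [← hr0]
  have hα : 0 ≤ (r' + r) / (2 * r') := div_nonneg (by linarith [neg_abs_le r]) (by linarith)
  have hβ : 0 ≤ (r' - r) / (2 * r') := div_nonneg (by linarith [le_abs_self r]) (by linarith)
  have hsum : (r' + r) / (2 * r') + (r' - r) / (2 * r') = 1 := by field_simp; ring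
  have h₁ := hf.2 hm' hm hα hβ hsum
  have h₂ := hf.2 hm' hm hβ hα (by linarith)
  simp only [smul_eq_mul] at h₁ h₂
  have e₁ : (r' + r) / (2 * r') * (m + r') + (r' - r) / (2 * r') * (m - r') = m + r := by
    field_simp; ring
  have e₂ : (r' - r) / (2 * r') * (m + r') + (r' + r) / (2 * r') * (m - r') = m - r := by
    field_simp; ring
  rw [e₁] at h₁
  rw [e₂] at h₂
  linear_combination h₁ + h₂ + (f (m + r') + f (m - r')) * hsum

noncomputable def pairMoment (p z s t : ℝ) : ℝ :=
  ∑ a : ℤˣ, ∑ b : ℤˣ, |z + a * s + b * t| ^ p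

theorem abs_add_sqrt_sq_rpow (p z w : ℝ) :
    |z + √(w ^ 2)| ^ p + |z - √(w ^ 2)| ^ p = |z + w| ^ p + |z - w| ^ p := by
  rw [sqrt_sq_eq_abs]
  rcases abs_choice w with h | h <;> rw [h]
  rw [sub_neg_eq_add, ← sub_eq_add_neg, add_comm]

theorem pairMoment_eq (p z s t : ℝ) : pairMoment p z s t =
    (|z + (s + t)| ^ p + |z - (s + t)| ^ p) + (|z + (s - t)| ^ p + |z - (s - t)| ^ p) := by
  simp only [pairMoment, Fintype.sum_units_int, Units.val_one, Units.val_neg, Int.cast_one,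
    Int.cast_neg]
  ring_nf

theorem pairMoment_le {p : ℝ} (hp : 3 ≤ p) (z : ℝ) {s t u v : ℝ}
    (hM : u ^ 2 + v ^ 2 = s ^ 2 + t ^ 2) (h : |u * v| ≤ |s * t|) :
    pairMoment p z u v ≤ pairMoment p z s t := by
  set G : ℝ → ℝ := fun r => |z + √r| ^ p + |z - √r| ^ p
  have hG : ∀ a b, pairMoment p z a b =
      G (a ^ 2 + b ^ 2 + 2 * (a * b)) + G (a ^ 2 + b ^ 2 - 2 * (a * b)) := fun a b => by
    rw [pairMoment_eq, show a ^ 2 + b ^ 2 + 2 * (a * b) = (a + b) ^ 2 by ring,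
      show a ^ 2 + b ^ 2 - 2 * (a * b) = (a - b) ^ 2 by ring]
    simp only [G, abs_add_sqrt_sq_rpow]
  have hst : 2 * |s * t| ≤ s ^ 2 + t ^ 2 := by
    rw [abs_mul, ← sq_abs s, ← sq_abs t]
    nlinarith [sq_nonneg (|s| - |t|)]
  have hconv := (convexOn_abs_add_sqrt_rpow_add_abs_sub_sqrt_rpow hp z).map_add_add_map_sub_le
    (m := s ^ 2 + t ^ 2) (r := 2 * (u * v)) (r' := 2 * |s * t|)
    (by simp only [mem_Ici]; linarith) (by simp only [mem_Ici]; positivity)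
    (by rw [abs_mul, abs_two]; linarith)
  rw [hG, hG, hM]
  rcases abs_choice (s * t) with hab | hab <;> rw [hab] at hconv
  · exact hconv
  · rw [mul_neg, sub_neg_eq_add, ← sub_eq_add_neg] at hconv
    linarith

end PairMoment

section SignMoment

variable {ι : Type*} [Fintype ι] [DecidableEq ι]

noncomputable def signMoment (p : ℝ) (c : ι → ℝ) : ℝ :=
  ∑ σ : ι → ℤˣ, |∑ i, c i * σ i| ^ p

theorem signMoment_comp_equiv (p : ℝ) (c : ι → ℝ) (e : ι ≃ ι) :
    signMoment p (c ∘ e) = signMoment p c := by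
  refine Fintype.sum_equiv (e.arrowCongr (Equiv.refl ℤˣ)) _ _ fun σ => ?_
  conv_rhs => rw [← e.sum_comp]
  simp [Equiv.arrowCongr_apply]

theorem signMoment_abs (p : ℝ) (c : ι → ℝ) : signMoment p (fun i => |c i|) = signMoment p c := by
  set u : ι → ℤˣ := fun i => if 0 ≤ c i then 1 else -1
  have hu : ∀ i, |c i| = c i * (u i : ℤ) := fun i => by
    by_cases h : 0 ≤ c i <;> simp [u, h, abs_of_nonneg, abs_of_neg, not_le.1]
  refine Fintype.sum_equiv (Equiv.mulLeft u) _ _ fun σ => ?_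
  simp only [hu, Equiv.coe_mulLeft, Pi.mul_apply, Units.val_mul, Int.cast_mul, mul_assoc]

theorem four_mul_signMoment (p : ℝ) (c : ι → ℝ) {j k : ι} (hjk : j ≠ k) :
    4 * signMoment p c =
      ∑ σ : ι → ℤˣ, pairMoment p (∑ i ∈ {j, k}ᶜ, c i * σ i) (c j) (c k) := by
  -- Multiplying `σ` by the flip `u a b` permutes the sign vectors; averaging over the four
  -- flips leaves the signs at `j` and `k` free, which is `pairMoment`.
  set u : ℤˣ → ℤˣ → ι → ℤˣ := fun a b => Pi.mulSingle j a * Pi.mulSingle k b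
  have hsplit : ∀ (σ : ι → ℤˣ) (a b : ℤˣ), ∑ i, c i * (u a b * σ) i =
      (∑ i ∈ {j, k}ᶜ, c i * σ i) + (a * σ j : ℤˣ) * c j + (b * σ k : ℤˣ) * c k := by
    intro σ a b
    rw [← Finset.sum_add_sum_compl {j, k}, Finset.sum_pair hjk, add_comm]
    have hrest : ∀ i ∈ ({j, k} : Finset ι)ᶜ, c i * (u a b * σ) i = c i * σ i := by
      intro i hi
      simp only [Finset.mem_compl, Finset.mem_insert, Finset.mem_singleton, not_or] at hi
      simp [u, Pi.mulSingle_eq_of_ne hi.1, Pi.mulSingle_eq_of_ne hi.2]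
    rw [Finset.sum_congr rfl hrest]
    simp [u, Pi.mulSingle_eq_of_ne hjk, Pi.mulSingle_eq_of_ne hjk.symm]
    ring
  have htrans : ∀ a b : ℤˣ,
      signMoment p c = ∑ σ : ι → ℤˣ, |∑ i, c i * (u a b * σ) i| ^ p := fun a b =>
    (Fintype.sum_equiv (Equiv.mulLeft (u a b)) _ _ fun σ => rfl).symm
  have hpair : ∀ σ : ι → ℤˣ, ∑ a : ℤˣ, ∑ b : ℤˣ, |∑ i, c i * (u a b * σ) i| ^ p =
      pairMoment p (∑ i ∈ {j, k}ᶜ, c i * σ i) (c j) (c k) := by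
    intro σ
    simp only [hsplit]
    refine Fintype.sum_equiv (Equiv.mulRight (σ j)) _ _ fun a => ?_
    exact Fintype.sum_equiv (Equiv.mulRight (σ k)) _ _ fun b => rfl
  calc 4 * signMoment p c = ∑ a : ℤˣ, ∑ b : ℤˣ, signMoment p c := by
        simp only [Finset.sum_const, Finset.card_univ, Fintype.card_units_int, nsmul_eq_mul]
        ring
    _ = ∑ a : ℤˣ, ∑ σ : ι → ℤˣ, ∑ b : ℤˣ, |∑ i, c i * (u a b * σ) i| ^ p :=
        Fintype.sum_congr _ _ fun a => (Fintype.sum_congr _ _ (htrans a)).trans Finset.sum_comm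
    _ = _ := by rw [Finset.sum_comm]; exact Fintype.sum_congr _ _ hpair

theorem signMoment_le_of_pair {p : ℝ} (hp : 3 ≤ p) {c c' : ι → ℝ} {j k : ι} (hjk : j ≠ k)
    (hc : ∀ i, i ≠ j → i ≠ k → c' i = c i) (hM : c j ^ 2 + c k ^ 2 = c' j ^ 2 + c' k ^ 2)
    (h : |c j * c k| ≤ |c' j * c' k|) : signMoment p c ≤ signMoment p c' := by
  have hrest : ∀ σ : ι → ℤˣ, ∑ i ∈ {j, k}ᶜ, c' i * σ i = ∑ i ∈ {j, k}ᶜ, c i * σ i :=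
    fun σ => Finset.sum_congr rfl fun i hi => by
      simp only [Finset.mem_compl, Finset.mem_insert, Finset.mem_singleton, not_or] at hi
      rw [hc i hi.1 hi.2]
  suffices 4 * signMoment p c ≤ 4 * signMoment p c' by linarith
  rw [four_mul_signMoment p c hjk, four_mul_signMoment p c' hjk]
  exact Finset.sum_le_sum fun σ _ => hrest σ ▸ pairMoment_le hp _ hM h

end SignMoment

section TTransform

open Finset

/-- `y'` arises from `y` by moving mass between two coordinates without pulling them apart:
as the sums agree, the product condition says `|y' j - y' k| ≤ |y j - y k|`. -/
def IsTTransform {ι : Type*} (y y' : ι → ℝ) : Prop :=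
  ∃ j k, j ≠ k ∧ (∀ i, i ≠ j → i ≠ k → y' i = y i) ∧ y' j + y' k = y j + y k ∧
    y j * y k ≤ y' j * y' k

theorem card_filter_ne_lt {α β : Type*} [Fintype α] [DecidableEq β] {x y y' : α → β}
    (h : ∀ i, x i ≠ y' i → x i ≠ y i) {w : α} (hw : x w ≠ y w) (hw' : x w = y' w) :
    #{i | x i ≠ y' i} < #{i | x i ≠ y i} := by
  refine card_lt_card ((ssubset_iff_of_subset fun i => ?_).2 ⟨w, ?_, ?_⟩) <;>
    simp_all

variable {n : ℕ} {x y : Fin n → ℝ}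

theorem exists_first_deficit (hpre : ∀ m, ∑ i ∈ Iic m, x i ≤ ∑ i ∈ Iic m, y i) (hne : x ≠ y) :
    ∃ j, x j < y j ∧ ∀ i < j, x i = y i := by
  obtain ⟨j, hj, hmin⟩ := wellFounded_lt.has_min {i | x i ≠ y i} (Function.ne_iff.1 hne)
  have hbelow : ∀ i < j, x i = y i := fun i hi => not_not.1 fun h => hmin i h hi
  refine ⟨j, lt_of_le_of_ne ?_ hj, hbelow⟩
  have := hpre j
  rwa [← Iio_insert, sum_insert (by simp), sum_insert (by simp),
    sum_congr rfl fun i hi => hbelow i (mem_Iio.1 hi), add_le_add_iff_right] at this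

theorem exists_first_surplus (htot : ∑ i, x i = ∑ i, y i) {j : Fin n} (hj : x j < y j)
    (hbelow : ∀ i < j, x i = y i) :
    ∃ k, j < k ∧ y k < x k ∧ ∀ i, j < i → i < k → x i ≤ y i := by
  have hne : {i | j < i ∧ y i < x i}.Nonempty := by
    by_contra! hempty
    have hle : ∀ i, x i ≤ y i := fun i => by
      rcases lt_trichotomy i j with h | rfl | h
      · exact (hbelow i h).le
      · exact hj.le
      · exact not_lt.1 fun h' => (Set.eq_empty_iff_forall_notMem.1 hempty) i ⟨h, h'⟩
    exact htot.not_lt (sum_lt_sum (fun i _ => hle i) ⟨j, mem_univ j, hj⟩)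
  obtain ⟨k, ⟨hjk, hk⟩, hmin⟩ := wellFounded_lt.has_min _ hne
  exact ⟨k, hjk, hk, fun i hji hik => not_lt.1 fun h => hmin i ⟨hji, h⟩ hik⟩

theorem sum_sub_single_add_single {ι : Type*} [DecidableEq ι] (y : ι → ℝ) (j k : ι) (δ : ℝ)
    (s : Finset ι) : ∑ i ∈ s, (y - Pi.single j δ + Pi.single k δ : ι → ℝ) i =
      ∑ i ∈ s, y i - (if j ∈ s then δ else 0) + (if k ∈ s then δ else 0) := by
  simp [sum_add_distrib, sum_sub_distrib, sum_pi_single']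

theorem sum_Iic_le_sum_Iic_sub_single_add_single
    (hpre : ∀ m, ∑ i ∈ Iic m, x i ≤ ∑ i ∈ Iic m, y i) {j k : Fin n} (hjk : j < k)
    (hbelow : ∀ i < j, x i = y i) (hbetween : ∀ i, j < i → i < k → x i ≤ y i) {δ : ℝ}
    (hδ : 0 ≤ δ) (hδj : δ ≤ y j - x j) (m : Fin n) :
    ∑ i ∈ Iic m, x i ≤ ∑ i ∈ Iic m, (y - Pi.single j δ + Pi.single k δ : Fin n → ℝ) i := by
  rw [sum_sub_single_add_single]
  simp only [mem_Iic]
  split_ifs with hjm hkm hkm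
  · linarith [hpre m]
  · have hgap : y j - x j ≤ ∑ i ∈ Iic m, (y i - x i) := by
      refine single_le_sum (f := fun i => y i - x i) (fun i hi => ?_) (mem_Iic.2 hjm)
      rcases lt_trichotomy i j with h | rfl | h
      · rw [hbelow i h, sub_self]
      · linarith
      · exact sub_nonneg.2 (hbetween i h ((mem_Iic.1 hi).trans_lt (not_le.1 hkm)))
    rw [sum_sub_distrib] at hgap
    linarith
  · exact absurd (hjk.le.trans hkm) hjm
  · linarith [hpre m]

theorem exists_tTransform_of_prefix_sum_le (hx : Antitone x) (hx0 : ∀ i, 0 ≤ x i)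
    (hy0 : ∀ i, 0 ≤ y i) (hpre : ∀ m, ∑ i ∈ Iic m, x i ≤ ∑ i ∈ Iic m, y i)
    (htot : ∑ i, x i = ∑ i, y i) (hne : x ≠ y) :
    ∃ y', IsTTransform y y' ∧ (∀ i, 0 ≤ y' i) ∧
      (∀ m, ∑ i ∈ Iic m, x i ≤ ∑ i ∈ Iic m, y' i) ∧ ∑ i, x i = ∑ i, y' i ∧
      #{i | x i ≠ y' i} < #{i | x i ≠ y i} := by
  obtain ⟨j, hj, hbelow⟩ := exists_first_deficit hpre hne
  obtain ⟨k, hjk, hk, hbetween⟩ := exists_first_surplus htot hj hbelow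
  set δ := min (y j - x j) (x k - y k)
  have hδ : 0 < δ := lt_min (sub_pos.2 hj) (sub_pos.2 hk)
  have hδj : δ ≤ y j - x j := min_le_left _ _
  have hδk : δ ≤ x k - y k := min_le_right _ _
  have hxkj : x k ≤ x j := hx hjk.le
  set y' := y - Pi.single j δ + Pi.single k δ
  have hy'j : y' j = y j - δ := by simp [y', Pi.single_eq_of_ne hjk.ne]
  have hy'k : y' k = y k + δ := by simp [y', Pi.single_eq_of_ne hjk.ne']
  have hy' : ∀ i, i ≠ j → i ≠ k → y' i = y i := fun i hij hik => by
    simp [y', Pi.single_eq_of_ne hij, Pi.single_eq_of_ne hik]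
  have hprod : y j * y k ≤ y' j * y' k := by
    rw [hy'j, hy'k]
    nlinarith [mul_nonneg hδ.le (show 0 ≤ y j - y k - δ by linarith)]
  refine ⟨y', ⟨j, k, hjk.ne, hy', by linarith, hprod⟩, fun i => ?_,
    sum_Iic_le_sum_Iic_sub_single_add_single hpre hjk hbelow hbetween hδ.le hδj, ?_, ?_⟩
  · by_cases hij : i = j
    · rw [hij, hy'j]; linarith [hx0 j]
    by_cases hik : i = k
    · rw [hik, hy'k]; linarith [hy0 k]
    rw [hy' i hij hik]; exact hy0 i
  · rw [htot, show ∑ i, y' i = _ from sum_sub_single_add_single y j k δ univ]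
    simp
  · refine card_filter_ne_lt (fun i hi => ?_) (w := if δ = y j - x j then j else k) ?_ ?_
    · by_cases hij : i = j
      · exact hij ▸ hj.ne
      by_cases hik : i = k
      · exact hik ▸ hk.ne'
      rwa [hy' i hij hik] at hi
    · split_ifs
      exacts [hj.ne, hk.ne']
    · split_ifs with h
      · linarith
      · have : δ = x k - y k := (min_choice _ _).resolve_left h
        linarith

theorem le_of_prefix_sum_le (F : (Fin n → ℝ) → ℝ)
    (hF : ∀ y y', (∀ i, 0 ≤ y i) → (∀ i, 0 ≤ y' i) → IsTTransform y y' → F y ≤ F y')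
    (hx : Antitone x) (hx0 : ∀ i, 0 ≤ x i) (hy0 : ∀ i, 0 ≤ y i)
    (hpre : ∀ m, ∑ i ∈ Iic m, x i ≤ ∑ i ∈ Iic m, y i) (htot : ∑ i, x i = ∑ i, y i) :
    F y ≤ F x := by
  induction hN : #{i | x i ≠ y i} using Nat.strong_induction_on generalizing y with
  | _ N ih =>
    by_cases hne : x = y
    · rw [hne]
    obtain ⟨y', hT, hy'0, hpre', htot', hlt⟩ :=
      exists_tTransform_of_prefix_sum_le hx hx0 hy0 hpre htot hne
    exact (hF y y' hy0 hy'0 hT).trans (ih _ (hN ▸ hlt) hy'0 hpre' htot' rfl)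

end TTransform

section Majorization

open Finset

variable {n : ℕ}

theorem Antitone.sum_le_sum_Iic {y : Fin n → ℝ} (hy : Antitone y) (hy0 : ∀ i, 0 ≤ y i)
    {C : Finset (Fin n)} {m : Fin n} (hC : #C ≤ m + 1) : ∑ i ∈ C, y i ≤ ∑ i ∈ Iic m, y i := by
  have hcard : #(C \ Iic m) ≤ #(Iic m \ C) := by
    rwa [card_sdiff_le_card_sdiff_iff, Fin.card_Iic]
  rw [← sum_inter_add_sum_sdiff C (Iic m), ← sum_inter_add_sum_sdiff (Iic m) C,
    inter_comm (Iic m) C]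
  refine add_le_add le_rfl ?_
  calc ∑ i ∈ C \ Iic m, y i ≤ #(C \ Iic m) • y m :=
        sum_le_card_nsmul _ _ _ fun i hi => hy (not_le.1 (mem_Iic.not.1 (mem_sdiff.1 hi).2)).le
    _ ≤ #(Iic m \ C) • y m := nsmul_le_nsmul_left (hy0 m) hcard
    _ ≤ ∑ i ∈ Iic m \ C, y i :=
        card_nsmul_le_sum _ _ _ fun i hi => hy (mem_Iic.1 (mem_sdiff.1 hi).1)

theorem IsMajorizedBy.sum_Iic_le {x y : Fin n → ℝ} (h : IsMajorizedBy x y) (hy0 : ∀ i, 0 ≤ y i)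
    {ex ey : Equiv.Perm (Fin n)} (hy : Antitone (y ∘ ey)) (m : Fin n) :
    ∑ i ∈ Iic m, x (ex i) ≤ ∑ i ∈ Iic m, y (ey i) := by
  obtain ⟨B, hB, hle⟩ := h ((Iic m).map ex.toEmbedding)
  rw [sum_map] at hle
  refine hle.trans ?_
  calc ∑ i ∈ B, y i = ∑ i ∈ B.map ey.symm.toEmbedding, y (ey i) := by simp [sum_map]
    _ ≤ ∑ i ∈ Iic m, y (ey i) := hy.sum_le_sum_Iic (fun i => hy0 _) (by simp [hB])

theorem le_of_isMajorizedBy (F : (Fin n → ℝ) → ℝ)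
    (hperm : ∀ y (e : Equiv.Perm (Fin n)), F (y ∘ e) = F y)
    (hF : ∀ y y', (∀ i, 0 ≤ y i) → (∀ i, 0 ≤ y' i) → IsTTransform y y' → F y ≤ F y')
    {x y : Fin n → ℝ} (hx0 : ∀ i, 0 ≤ x i) (hy0 : ∀ i, 0 ≤ y i) (h : IsMajorizedBy x y)
    (htot : ∑ i, x i = ∑ i, y i) : F y ≤ F x := by
  set ex := Tuple.sort (OrderDual.toDual ∘ x)
  set ey := Tuple.sort (OrderDual.toDual ∘ y)
  have hxs : Antitone (x ∘ ex) := monotone_toDual_comp_iff.1 (Tuple.monotone_sort _)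
  have hys : Antitone (y ∘ ey) := monotone_toDual_comp_iff.1 (Tuple.monotone_sort _)
  rw [← hperm x ex, ← hperm y ey]
  refine le_of_prefix_sum_le F hF hxs (fun i => hx0 _) (fun i => hy0 _) (h.sum_Iic_le hy0 hys) ?_
  simp only [Function.comp_apply, Equiv.sum_comp, htot]

theorem signMoment_le_of_isMajorizedBy {p : ℝ} (hp : 3 ≤ p) {a b : Fin n → ℝ}
    (h : IsMajorizedBy (fun i => a i ^ 2) (fun i => b i ^ 2))
    (htot : ∑ i, a i ^ 2 = ∑ i, b i ^ 2) : signMoment p b ≤ signMoment p a := by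
  have hsq : ∀ c : Fin n → ℝ, signMoment p (fun i => √(c i ^ 2)) = signMoment p c := fun c => by
    simp only [sqrt_sq_eq_abs, signMoment_abs]
  rw [← hsq a, ← hsq b]
  refine le_of_isMajorizedBy (fun y => signMoment p fun i => √(y i))
    (fun y e => signMoment_comp_equiv p (fun i => √(y i)) e) ?_ (fun i => sq_nonneg _)
    (fun i => sq_nonneg _) h htot
  rintro y y' hy hy' ⟨j, k, hjk, hrest, hsum, hprod⟩
  refine signMoment_le_of_pair hp hjk (fun i hij hik => by simp only [hrest i hij hik]) ?_ ?_
  · simp only [sq_sqrt (hy _), sq_sqrt (hy' _), hsum]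
  · rw [abs_of_nonneg (by positivity), abs_of_nonneg (by positivity), ← sqrt_mul (hy j),
      ← sqrt_mul (hy' j)]
    exact sqrt_le_sqrt hprod

end Majorization

section Rademacher

open scoped ENNReal

instance : IsProbabilityMeasure rademacherLaw := by
  constructor
  simp [rademacherLaw, ENNReal.inv_two_add_inv_two]

theorem rademacherLaw_eq_sum_dirac :
    rademacherLaw = (2⁻¹ : ℝ≥0∞) • ∑ u : ℤˣ, Measure.dirac (u : ℝ) := by
  simp [rademacherLaw, smul_add]

theorem pi_rademacherLaw (ι : Type*) [Fintype ι] [DecidableEq ι] :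
    Measure.pi (fun _ : ι => rademacherLaw) =
      (2⁻¹ : ℝ≥0∞) ^ Fintype.card ι • ∑ σ : ι → ℤˣ, Measure.dirac (fun i => (σ i : ℝ)) := by
  refine Measure.pi_eq fun s hs => ?_
  simp only [Measure.smul_apply, Measure.coe_finsetSum, Finset.sum_apply,
    Measure.dirac_apply' _ (MeasurableSet.univ_pi hs), rademacherLaw_eq_sum_dirac,
    Measure.dirac_apply' _ (hs _), smul_eq_mul, Finset.prod_mul_distrib, Finset.prod_const,
    Finset.card_univ, Fintype.prod_sum]
  simp_rw [← Finset.coe_univ, Set.indicator_pi_one_apply]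

theorem integral_abs_sum_mul_rpow {ι Ω : Type*} [Fintype ι] [DecidableEq ι] [MeasureSpace Ω]
    [IsProbabilityMeasure (ℙ : Measure Ω)] {ε : ι → Ω → ℝ} (hmeas : ∀ i, Measurable (ε i))
    (hlaw : ∀ i, Measure.map (ε i) ℙ = rademacherLaw) (hindep : iIndepFun ε ℙ)
    (p : ℝ) (c : ι → ℝ) :
    ∫ ω, |∑ i, c i * ε i ω| ^ p ∂ℙ = (2⁻¹ : ℝ) ^ Fintype.card ι * signMoment p c := by
  have hjoint : Measure.map (fun ω i => ε i ω) ℙ = Measure.pi fun _ => rademacherLaw := by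
    rw [(iIndepFun_iff_map_fun_eq_pi_map fun i => (hmeas i).aemeasurable).1 hindep]
    simp only [hlaw]
  have hf : Measurable fun v : ι → ℝ => |∑ i, c i * v i| ^ p := by fun_prop
  rw [← integral_map (measurable_pi_lambda _ hmeas).aemeasurable hf.aestronglyMeasurable,
    hjoint, pi_rademacherLaw, integral_smul_measure,
    integral_finsetSum_measure fun σ _ => integrable_dirac (by simp)]
  simp [integral_dirac, signMoment]

end Rademacher

/-- **Schur monotonicity of p-th moments of Rademacher sums, p ≥ 3.** -/
theorem schur_monotone_moment (p : ℝ) (hp : 3 ≤ p)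
    (n : ℕ) (Ω : Type) [MeasureSpace Ω] [IsProbabilityMeasure (ℙ : Measure Ω)]
    (ε : Fin n → Ω → ℝ)
    (hmeas : ∀ i, Measurable (ε i))
    (hlaw : ∀ i, Measure.map (ε i) ℙ = rademacherLaw)
    (hindep : iIndepFun ε ℙ)
    (a b : Fin n → ℝ)
    (ha : ∑ i, (a i) ^ 2 = 1) (hb : ∑ i, (b i) ^ 2 = 1)
    (hmaj : IsMajorizedBy (fun i => (a i) ^ 2) (fun i => (b i) ^ 2)) :
    ∫ ω, |∑ i, b i * ε i ω| ^ p ∂ℙ ≤ ∫ ω, |∑ i, a i * ε i ω| ^ p ∂ℙ := by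
  rw [integral_abs_sum_mul_rpow hmeas hlaw hindep, integral_abs_sum_mul_rpow hmeas hlaw hindep]
  exact mul_le_mul_of_nonneg_left (signMoment_le_of_isMajorizedBy hp hmaj (ha.trans hb.symm))
    (by positivity)
end

section
/- Let 3 < p < 4, s ∈ ℝ and t > 0, and let ψ_s(t) = |s + √t|^p + |s − √t|^p. Then ψ_s''(t) ≥ (p(p−1)(p−2)(p−3)/6) (|s| + √t)^{p−4}. -/
open Real Set Filter Topology

/-!
Put `x = √t`, `f = |·|^p` and `F x = f (s + x) + f (s - x)`, so that `ψ_s t = F x` and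
`ψ_s'' t = (x F''(x) - F'(x)) / (4 x³)`. The numerator vanishes at `x = 0` and has derivative
`x F'''(x)`, where `F''' = p(p-1)(p-2) (φ(s + ·) - φ(s - ·))` for the odd function
`φ y = |y|^(p-4) y`. As `p ≤ 4`, `φ' = (p-3) |y|^(p-4) ≥ (p-3) R^(p-4)` on `[-R, R]`; with
`R = |s| + x` this gives `x F'''(x) ≥ 2 p(p-1)(p-2)(p-3) R^(p-4) x²`, and integrating from `0`
yields a numerator of at least `(2/3) p(p-1)(p-2)(p-3) R^(p-4) x³`.

Below, `F = absPowSum p s`, `F' = p * signedPowDiff (p-2) s` and `φ = signedPow (p-4)`.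
-/

noncomputable def signedPow (q y : ℝ) : ℝ := |y| ^ q * y

lemma abs_signedPow {q : ℝ} (hq : -1 < q) (y : ℝ) : |signedPow q y| = |y| ^ (q + 1) := by
  rw [signedPow, abs_mul, abs_of_nonneg (rpow_nonneg (abs_nonneg y) q),
    rpow_add_one' (abs_nonneg y) (by linarith)]

lemma continuous_signedPow {q : ℝ} (hq : -1 < q) : Continuous (signedPow q) := by
  refine continuous_iff_continuousAt.2 fun y => ?_
  rcases eq_or_ne y 0 with rfl | hy
  · have hlim : Tendsto (fun y : ℝ => |y| ^ (q + 1)) (𝓝 0) (𝓝 0) := by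
      simpa [zero_rpow (by linarith : q + 1 ≠ 0)] using
        (continuous_abs.rpow_const fun _ => Or.inr (by linarith : 0 ≤ q + 1)).tendsto 0
    simpa [ContinuousAt, signedPow] using
      squeeze_zero_norm (fun y => (abs_signedPow hq y).le) hlim
  · exact (continuous_abs.continuousAt.rpow_const (Or.inl (abs_ne_zero.2 hy))).mul
      continuousAt_id

lemma hasDerivAt_signedPow_of_ne (q : ℝ) {y : ℝ} (hy : y ≠ 0) :
    HasDerivAt (signedPow q) ((q + 1) * |y| ^ q) y := by
  have hy' : |y| ≠ 0 := abs_ne_zero.2 hy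
  refine (((hasDerivAt_abs hy).rpow_const (p := q) (Or.inl hy')).mul
    (hasDerivAt_id y)).congr_deriv ?_
  have hsign : (SignType.sign y : ℝ) * y = |y| := sign_mul_self y
  have hpow : |y| ^ (q - 1) * |y| = |y| ^ q := by rw [← rpow_add_one hy', sub_add_cancel]
  rw [id, mul_one]
  linear_combination q * |y| ^ (q - 1) * hsign + q * hpow

lemma hasDerivAt_signedPow {q : ℝ} (hq : 0 ≤ q) (y : ℝ) :
    HasDerivAt (signedPow q) ((q + 1) * |y| ^ q) y := by
  rcases eq_or_ne y 0 with rfl | hy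
  · exact hasDerivAt_of_hasDerivAt_of_ne (fun y hy => hasDerivAt_signedPow_of_ne q hy)
      (continuous_signedPow (by linarith)).continuousAt
      (continuousAt_const.mul (continuous_abs.rpow_const fun _ => Or.inr hq).continuousAt)
  · exact hasDerivAt_signedPow_of_ne q hy

lemma monotoneOn_signedPow_sub_mul {q R : ℝ} (hq₁ : -1 < q) (hq₀ : q ≤ 0) (hR : 0 ≤ R) :
    MonotoneOn (fun y => signedPow q y - (q + 1) * R ^ q * y) (Icc (-R) R) := by
  have hcont : Continuous fun y => signedPow q y - (q + 1) * R ^ q * y :=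
    (continuous_signedPow hq₁).sub (continuous_const.mul continuous_id)
  have hmonoOn : ∀ a b : ℝ, (∀ y ∈ Ioo a b, y ≠ 0 ∧ |y| ≤ R) →
      MonotoneOn (fun y => signedPow q y - (q + 1) * R ^ q * y) (Icc a b) := by
    intro a b hab
    refine monotoneOn_of_hasDerivWithinAt_nonneg (convex_Icc a b) hcont.continuousOn
      (f' := fun y => (q + 1) * |y| ^ q - (q + 1) * R ^ q) (fun y hy => ?_) (fun y hy => ?_)
      <;> rw [interior_Icc] at hy <;> obtain ⟨hy₀, hyR⟩ := hab y hy
    · exact ((hasDerivAt_signedPow_of_ne q hy₀).sub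
        ((hasDerivAt_id y).const_mul _)).hasDerivWithinAt.congr_deriv (by simp)
    · have hRy : R ^ q ≤ |y| ^ q := rpow_le_rpow_of_nonpos (abs_pos.2 hy₀) hyR hq₀
      have hq : 0 < q + 1 := by linarith
      simp only [sub_nonneg]
      gcongr
  rw [← Icc_union_Icc_eq_Icc (neg_nonpos.2 hR) hR]
  refine (hmonoOn (-R) 0 fun y hy => ⟨hy.2.ne, ?_⟩).union_right
    (hmonoOn 0 R fun y hy => ⟨hy.1.ne', ?_⟩) (isGreatest_Icc (neg_nonpos.2 hR))
    (isLeast_Icc hR)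
  · rw [abs_of_neg hy.2]; linarith [hy.1]
  · rw [abs_of_pos hy.1]; exact hy.2.le

lemma mul_sub_le_signedPow_sub {q R A B : ℝ} (hq₁ : -1 < q) (hq₀ : q ≤ 0) (hA : |A| ≤ R)
    (hB : |B| ≤ R) (hBA : B ≤ A) :
    (q + 1) * R ^ q * (A - B) ≤ signedPow q A - signedPow q B := by
  have := monotoneOn_signedPow_sub_mul hq₁ hq₀ ((abs_nonneg A).trans hA) (abs_le.1 hB)
    (abs_le.1 hA) hBA
  linarith

lemma mul_cube_div_three_le_sub {M M' : ℝ → ℝ} {c x : ℝ} (hx : 0 ≤ x)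
    (hM : ∀ r ∈ Icc 0 x, HasDerivAt M (M' r) r) (hM' : ∀ r ∈ Ioo 0 x, c * r ^ 2 ≤ M' r) :
    c / 3 * x ^ 3 ≤ M x - M 0 := by
  have hcube (r : ℝ) : HasDerivAt (fun r => c / 3 * r ^ 3) (c * r ^ 2) r := by
    refine ((hasDerivAt_pow 3 r).const_mul (c / 3)).congr_deriv ?_
    norm_num
    ring
  have hmono : MonotoneOn (fun r => M r - c / 3 * r ^ 3) (Icc 0 x) := by
    refine monotoneOn_of_hasDerivWithinAt_nonneg (convex_Icc 0 x)
      (fun r hr => ((hM r hr).continuousAt.sub (hcube r).continuousAt).continuousWithinAt)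
      (f' := fun r => M' r - c * r ^ 2) (fun r hr => ?_) (fun r hr => ?_) <;>
      rw [interior_Icc] at hr
    · exact ((hM r (Ioo_subset_Icc_self hr)).sub (hcube r)).hasDerivWithinAt
    · exact sub_nonneg.2 (hM' r hr)
  have := hmono (left_mem_Icc.2 hx) (right_mem_Icc.2 hx) hx
  simp only at this
  linarith

lemma deriv_deriv_comp_sqrt {F F' : ℝ → ℝ} {F'' t : ℝ} (ht : 0 < t)
    (hF : ∀ x > 0, HasDerivAt F (F' x) x) (hF' : HasDerivAt F' F'' √t) :
    deriv (deriv fun u => F √u) t = (√t * F'' - F' √t) / (4 * √t ^ 3) := by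
  have hsqrt {u : ℝ} (hu : 0 < u) : HasDerivAt Real.sqrt (1 / (2 * √u)) u :=
    hasDerivAt_sqrt hu.ne'
  have hderiv : deriv (fun u => F √u) =ᶠ[𝓝 t] fun u => F' √u / (2 * √u) := by
    filter_upwards [lt_mem_nhds ht] with u hu
    have h : HasDerivAt (fun u => F √u) (F' √u * (1 / (2 * √u))) u :=
      (hF _ (sqrt_pos.2 hu)).comp u (hsqrt hu)
    rw [h.deriv]
    ring
  have hx : 0 < √t := sqrt_pos.2 ht
  have h : HasDerivAt (fun u => F' √u / (2 * √u))
      ((F'' * (1 / (2 * √t)) * (2 * √t) - F' √t * (2 * (1 / (2 * √t)))) / (2 * √t) ^ 2) t :=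
    (hF'.comp t (hsqrt ht)).div ((hsqrt ht).const_mul 2) (by positivity)
  rw [hderiv.deriv_eq, h.deriv]
  field_simp
  ring

noncomputable def absPowSum (q s x : ℝ) : ℝ := |s + x| ^ q + |s - x| ^ q

noncomputable def signedPowDiff (q s x : ℝ) : ℝ := signedPow q (s + x) - signedPow q (s - x)

lemma hasDerivAt_absPowSum {q : ℝ} (hq : 1 < q) (s x : ℝ) :
    HasDerivAt (absPowSum q s) (q * signedPowDiff (q - 2) s x) x := by
  have hplus := (hasDerivAt_abs_rpow (s + x) hq).comp x ((hasDerivAt_id x).const_add s)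
  have hminus := (hasDerivAt_abs_rpow (s - x) hq).comp x ((hasDerivAt_id x).const_sub s)
  refine (hplus.add hminus).congr_deriv ?_
  simp only [signedPowDiff, signedPow]
  ring

lemma hasDerivAt_signedPowDiff {q : ℝ} (hq : 0 ≤ q) (s x : ℝ) :
    HasDerivAt (signedPowDiff q s) ((q + 1) * absPowSum q s x) x := by
  have hplus := (hasDerivAt_signedPow hq (s + x)).comp x ((hasDerivAt_id x).const_add s)
  have hminus := (hasDerivAt_signedPow hq (s - x)).comp x ((hasDerivAt_id x).const_sub s)
  refine (hplus.sub hminus).congr_deriv ?_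
  simp only [absPowSum]
  ring

lemma mul_le_signedPowDiff {q R s x : ℝ} (hq₁ : -1 < q) (hq₀ : q ≤ 0) (hx : 0 ≤ x)
    (hR : |s| + x ≤ R) : 2 * (q + 1) * R ^ q * x ≤ signedPowDiff q s x := by
  have hplus : |s + x| ≤ R := (abs_add_le s x).trans (by rwa [abs_of_nonneg hx])
  have hminus : |s - x| ≤ R := (abs_sub s x).trans (by rwa [abs_of_nonneg hx])
  have := mul_sub_le_signedPow_sub hq₁ hq₀ hplus hminus (by linarith)
  rw [signedPowDiff]
  linarith

lemma cube_mul_le_mul_absPowSum_sub_signedPowDiff {q : ℝ} (hq₁ : 1 < q) (hq₂ : q ≤ 2)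
    (s : ℝ) {x : ℝ} (hx : 0 ≤ x) :
    2 / 3 * ((q + 1) * q * (q - 1)) * (|s| + x) ^ (q - 2) * x ^ 3 ≤
      (q + 1) * x * absPowSum q s x - signedPowDiff q s x := by
  have hM (r : ℝ) : HasDerivAt (fun r => (q + 1) * r * absPowSum q s r - signedPowDiff q s r)
      ((q + 1) * q * r * signedPowDiff (q - 2) s r) r := by
    refine ((((hasDerivAt_id r).const_mul (q + 1)).mul (hasDerivAt_absPowSum hq₁ s r)).sub
      (hasDerivAt_signedPowDiff (by linarith) s r)).congr_deriv ?_
    simp only [id_eq]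
    ring
  have hM' : ∀ r ∈ Ioo 0 x, 2 * (q + 1) * q * (q - 1) * (|s| + x) ^ (q - 2) * r ^ 2 ≤
      (q + 1) * q * r * signedPowDiff (q - 2) s r := by
    rintro r ⟨hr₀, hrx⟩
    have := mul_le_signedPowDiff (q := q - 2) (by linarith) (by linarith) hr₀.le
      (by linarith : |s| + r ≤ |s| + x)
    linear_combination (q + 1) * q * r * this
  have := mul_cube_div_three_le_sub hx (fun r _ => hM r) hM'
  have hM₀ : signedPowDiff q s 0 = 0 := by simp [signedPowDiff]
  simp only [hM₀, mul_zero, zero_mul, sub_zero] at this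
  linarith

/-- **Lower bound on `ψ_s''` for `3 < p < 4`** (Lemma 2.4):
`ψ_s''(t) ≥ p(p−1)(p−2)(p−3)/6 · (|s| + √t)^{p−4}`. -/
theorem psi_second_deriv_ge_of_lt_four (p : ℝ) (hp3 : 3 < p) (hp4 : p < 4) (s t : ℝ)
    (ht : 0 < t) :
    deriv (deriv (fun u : ℝ => |s + Real.sqrt u| ^ p + |s - Real.sqrt u| ^ p)) t ≥
      p * (p - 1) * (p - 2) * (p - 3) / 6 * (|s| + Real.sqrt t) ^ (p - 4) := by
  have hx : 0 < √t := sqrt_pos.2 ht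
  have hψ := deriv_deriv_comp_sqrt ht (fun x _ => hasDerivAt_absPowSum (by linarith) s x)
    ((hasDerivAt_signedPowDiff (by linarith) s √t).const_mul p)
  have hM := cube_mul_le_mul_absPowSum_sub_signedPowDiff (q := p - 2) (by linarith)
    (by linarith) s hx.le
  rw [show p - 2 - 2 = p - 4 by ring] at hM
  change deriv (deriv fun u => absPowSum p s √u) t ≥ _
  rw [hψ, ge_iff_le, le_div_iff₀ (by positivity)]
  linear_combination p * hM
end
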